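/- arXiv:2205.02614 — 11 statements merged into one kernel-verified Lean document; each statement's English description precedes it below -/
import Mathlib

section
/- Let k ≥ 2, m ≥ 1, let E : (Fin m → Fin k) → Fin t be an encoding function, and let H ⊊ Fin m be a set. Suppose that for every codeword c and every side-information realisation x' : H → Fin k, there exist an index i ∉ H and a value v ∈ Fin k such that every x in the preimage E⁻¹(c) with x restricted to H equal to x' satisfies x i = v. Then for every codeword c, the preimage E⁻¹(c) has cardinality at most k^(m-1). -/
theorem stmt_0 (k m t : ℕ) (hk : 2 ≤ k) (hm : 1 ≤ m)
    (E : (Fin m → Fin k) → Fin t) (H : Finset (Fin m)) (hH : H ⊂ Finset.univ)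
    (hdec : ∀ (c : Fin t) (x' : Fin m → Fin k),
      ∃ i ∉ H, ∃ v : Fin k, ∀ x, E x = c → (∀ h ∈ H, x h = x' h) → x i = v) :
    ∀ c : Fin t, (Finset.univ.filter (fun x => E x = c)).card ≤ k ^ (m - 1) := by
  haveI : NeZero k := ⟨by omega⟩
  have hHm : H.card < m := by
    have := Finset.card_lt_card hH
    simpa using this
  intro c
  set S : Finset (Fin m → Fin k) := Finset.univ.filter (fun x => E x = c) with hS
  set r : (Fin m → Fin k) → (Fin m → Fin k) :=
    fun x h => if h ∈ H then x h else 0 with hr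
  set B : Finset (Fin m → Fin k) :=
    Finset.univ.filter (fun y => ∀ h, h ∉ H → y h = 0) with hB
  have hmem : ∀ x ∈ S, r x ∈ B := by
    intro x _
    simp only [hB, Finset.mem_filter, Finset.mem_univ, true_and, hr]
    intro h hh
    simp [hh]
  have hsum := Finset.card_eq_sum_card_fiberwise hmem
  -- bound each fiber
  have hfiber : ∀ y ∈ B, (S.filter (fun x => r x = y)).card ≤ k ^ (m - H.card - 1) := by
    intro y hy
    obtain ⟨i, hiH, v, hv⟩ := hdec c y
    have hsub : S.filter (fun x => r x = y) ⊆
        Finset.univ.filter (fun x => (∀ h ∈ H, x h = y h) ∧ x i = v) := by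
      intro x hx
      simp only [hS, Finset.mem_filter, Finset.mem_univ, true_and] at hx ⊢
      obtain ⟨hEx, hrx⟩ := hx
      have hxy : ∀ h ∈ H, x h = y h := by
        intro h hh
        rw [← hrx]; simp [hr, hh]
      exact ⟨hxy, hv x hEx hxy⟩
    refine le_trans (Finset.card_le_card hsub) ?_
    -- inject into functions on complement of H ∪ {i}
    have hinj : (Finset.univ.filter
        (fun x : Fin m → Fin k => (∀ h ∈ H, x h = y h) ∧ x i = v)).card ≤
        Fintype.card (↥((H ∪ {i})ᶜ : Finset (Fin m)) → Fin k) := by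
      rw [← Finset.card_univ]
      apply Finset.card_le_card_of_injOn (fun x => fun h => x h.1)
      · intro x _; exact Finset.mem_univ _
      · intro x1 h1 x2 h2 heq
        simp only [Finset.mem_coe, Finset.mem_filter, Finset.mem_univ, true_and] at h1 h2
        funext h
        by_cases hh : h ∈ H
        · rw [h1.1 h hh, h2.1 h hh]
        · by_cases hhi : h = i
          · rw [hhi, h1.2, h2.2]
          · have hmemc : h ∈ ((H ∪ {i})ᶜ : Finset (Fin m)) := by
              simp [hh, hhi]
            exact congrFun heq ⟨h, hmemc⟩
    have hcard : Fintype.card (↥((H ∪ {i})ᶜ : Finset (Fin m)) → Fin k)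
        = k ^ (m - H.card - 1) := by
      rw [Fintype.card_fun, Fintype.card_fin, Fintype.card_coe,
        Finset.card_compl, Finset.card_union_of_disjoint (by simpa using hiH)]
      rw [Fintype.card_fin, Finset.card_singleton]
      congr 1
    exact hcard ▸ hinj
  have hBcard : B.card ≤ k ^ H.card := by
    have : B.card ≤ Fintype.card (↥H → Fin k) := by
      rw [← Finset.card_univ]
      apply Finset.card_le_card_of_injOn (fun y => fun h => y h.1)
      · intro y _; exact Finset.mem_univ _
      · intro y1 h1 y2 h2 heq
        simp only [Finset.mem_coe, hB, Finset.mem_filter, Finset.mem_univ, true_and] at h1 h2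
        funext h
        by_cases hh : h ∈ H
        · exact congrFun heq ⟨h, hh⟩
        · rw [h1 h hh, h2 h hh]
    rwa [Fintype.card_fun, Fintype.card_fin, Fintype.card_coe] at this
  calc S.card = ∑ y ∈ B, (S.filter (fun x => r x = y)).card := hsum
    _ ≤ ∑ _y ∈ B, k ^ (m - H.card - 1) := Finset.sum_le_sum hfiber
    _ = B.card * k ^ (m - H.card - 1) := by rw [Finset.sum_const, smul_eq_mul]
    _ ≤ k ^ H.card * k ^ (m - H.card - 1) := Nat.mul_le_mul_right _ hBcard
    _ = k ^ (m - 1) := by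
        rw [← pow_add]
        congr 1
        omega
end

section
/- Let k ≥ 2, m ≥ 1, and suppose E : (Fin m → Fin k) → Fin t is an encoding function such that for some nonempty proper subset H ⊊ Fin m, for every codeword c and side-information x' : H → Fin k, all elements of {x ∈ E⁻¹(c) : x|_H = x'} agree on some coordinate outside H. Then log t / log k ≥ 1 (equivalently t ≥ k). -/
theorem stmt_2 (k m t : ℕ) (hk : 2 ≤ k) (hm : 1 ≤ m)
    (E : (Fin m → Fin k) → Fin t) (H : Finset (Fin m))
    (hHne : H.Nonempty) (hH : H ⊂ Finset.univ)
    (hdec : ∀ (c : Fin t) (x' : Fin m → Fin k),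
      ∃ i ∉ H, ∃ v : Fin k, ∀ x, E x = c → (∀ h ∈ H, x h = x' h) → x i = v) :
    k ≤ t ∧ (1 : ℝ) ≤ Real.log (t : ℝ) / Real.log (k : ℝ) := by
  have hk0 : 0 < k := by omega
  -- the family of messages: constant v outside H, 0 on H
  set X : Fin k → (Fin m → Fin k) := fun v j => if j ∈ H then ⟨0, hk0⟩ else v with hX
  have hinj : Function.Injective (fun v => E (X v)) := by
    intro v w hvw
    simp only at hvw
    obtain ⟨i, hiH, u, hu⟩ := hdec (E (X w)) (X v)
    have h1 : X v i = u := hu (X v) hvw (fun h _ => rfl)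
    have h2 : X w i = u := by
      refine hu (X w) rfl (fun h hh => ?_)
      simp [hX, hh]
    simp only [hX, if_neg hiH] at h1 h2
    rw [h1, h2]
  have hkt : k ≤ t := by
    simpa using Fintype.card_le_of_injective _ hinj
  refine ⟨hkt, ?_⟩
  have hlogk : 0 < Real.log k := Real.log_pos (by exact_mod_cast by omega)
  rw [le_div_iff₀ hlogk, one_mul]
  exact Real.log_le_log (by positivity) (by exact_mod_cast hkt)
end

section
/- Let F be a finite field, E an T × m matrix over F, H ⊊ Fin m, and fix a codeword c ∈ F^T and side information x_H. Consider the set S of all x ∈ F^m with E x = c and x restricted to H equal to x_H. If S is nonempty and there exists j ∉ H such that all elements of S agree in coordinate j, then for every codeword c' and every side information x'_H with corresponding nonempty solution set S', all elements of S' agree in coordinate j (with the same index j). -/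
theorem stmt_4 (F : Type*) [Field F] [Fintype F] (T m : ℕ)
    (E : Matrix (Fin T) (Fin m) F) (H : Finset (Fin m)) (hH : H ⊂ Finset.univ)
    (c : Fin T → F) (xH : Fin m → F) (j : Fin m) (hj : j ∉ H)
    (hne : ∃ x : Fin m → F, E.mulVec x = c ∧ ∀ h ∈ H, x h = xH h)
    (hagree : ∀ x y : Fin m → F,
      (E.mulVec x = c ∧ ∀ h ∈ H, x h = xH h) →
      (E.mulVec y = c ∧ ∀ h ∈ H, y h = xH h) → x j = y j) :
    ∀ (c' : Fin T → F) (xH' : Fin m → F),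
      (∃ x : Fin m → F, E.mulVec x = c' ∧ ∀ h ∈ H, x h = xH' h) →
      ∀ x y : Fin m → F,
        (E.mulVec x = c' ∧ ∀ h ∈ H, x h = xH' h) →
        (E.mulVec y = c' ∧ ∀ h ∈ H, y h = xH' h) → x j = y j := by
  rintro c' xH' - x y ⟨hx, hxH⟩ ⟨hy, hyH⟩
  obtain ⟨x0, hx0, hx0H⟩ := hne
  have key : (x0 + (x - y)) j = x0 j := by
    apply hagree
    · constructor
      · rw [Matrix.mulVec_add, Matrix.mulVec_sub, hx, hy, hx0]
        simp
      · intro h hh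
        simp [hx0H h hh, hxH h hh, hyH h hh]
    · exact ⟨hx0, hx0H⟩
  have h2 : x0 j + (x j - y j) = x0 j := by simpa using key
  linear_combination h2
end

section
/- Let q be a prime power, m ≥ 1, E : 𝔽_q^m → 𝔽_q^T a linear map, and H ⊊ Fin m. Suppose that for every c in the range of E and every x_H, the nonempty affine solution set {x : E x = c, x|_H = x_H} has some coordinate j ∉ H on which all its elements agree (j may a priori depend on c and x_H). Then there exists a single fixed j ∉ H such that for every x, y ∈ 𝔽_q^m with E x = E y and x|_H = y|_H, we have x_j = y_j. -/
theorem stmt_5 (q : ℕ) (hq : IsPrimePow q) (F : Type*) [Field F] [Fintype F]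
    (hcard : Fintype.card F = q) (m T : ℕ) (hm : 1 ≤ m)
    (E : (Fin m → F) →ₗ[F] (Fin T → F)) (H : Finset (Fin m)) (hH : H ⊂ Finset.univ)
    (hdec : ∀ c ∈ Set.range E, ∀ xH : Fin m → F,
      ({x : Fin m → F | E x = c ∧ ∀ h ∈ H, x h = xH h}.Nonempty) →
      ∃ j ∉ H, ∀ x y : Fin m → F,
        (E x = c ∧ ∀ h ∈ H, x h = xH h) → (E y = c ∧ ∀ h ∈ H, y h = xH h) → x j = y j) :
    ∃ j ∉ H, ∀ x y : Fin m → F, E x = E y → (∀ h ∈ H, x h = y h) → x j = y j := by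
  obtain ⟨j, hj, hagree⟩ := hdec 0 ⟨0, map_zero E⟩ 0
    ⟨0, by simp [Set.mem_setOf_eq]⟩
  refine ⟨j, hj, fun x y hE hHxy => ?_⟩
  have key := hagree (x - y) 0
    ⟨by simp [map_sub, hE], fun h hh => by simp [hHxy h hh]⟩
    ⟨map_zero E, fun h hh => rfl⟩
  have : (x - y) j = 0 := key
  have := sub_eq_zero.mp (by simpa using this)
  exact this
end

section
/- Let m ≥ 3, k ≥ 2, and let E : (Fin m → Fin k) → Fin t satisfy the very-pliable decoding condition for the m receivers where receiver i knows only message i (i.e., for each i, codeword c, and value a, there exist j ≠ i and v such that every x ∈ E⁻¹(c) with x i = a has x j = v). Then every fiber E⁻¹(c) has cardinality at most (m+1) · k^(m-2). -/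
open Finset

lemma restrict_le {m k : ℕ} (s : Finset (Fin m)) (T : Finset (Fin m → Fin k))
    (h : ∀ x ∈ T, ∀ y ∈ T, (∀ p, p ∉ s → x p = y p) → x = y) :
    T.card ≤ k ^ (m - s.card) := by
  classical
  have hc : T.card ≤ (Finset.univ : Finset ((sᶜ : Finset (Fin m)) → Fin k)).card := by
    apply Finset.card_le_card_of_injOn (fun x (p : (sᶜ : Finset (Fin m))) => x p.1)
    · intro x _; exact Finset.mem_univ _
    · intro x hx y hy hxy
      apply h x hx y hy
      intro p hp
      exact congrFun hxy ⟨p, by simpa using hp⟩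
  calc T.card ≤ _ := hc
    _ = k ^ (m - s.card) := by
      rw [Finset.card_univ, Fintype.card_fun, Fintype.card_coe, Finset.card_compl,
        Fintype.card_fin, Fintype.card_fin]

lemma fiber_le {α γ : Type*} [DecidableEq γ] [Fintype γ] (S : Finset α) (g : α → γ) (n : ℕ)
    (h : ∀ gv : γ, (S.filter (fun x => g x = gv)).card ≤ n) :
    S.card ≤ Fintype.card γ * n := by
  classical
  rw [Finset.card_eq_sum_card_fiberwise (fun x _ => Finset.mem_univ (g x))]
  calc ∑ gv : γ, (S.filter (fun x => g x = gv)).card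
      ≤ ∑ _gv : γ, n := Finset.sum_le_sum (fun gv _ => h gv)
    _ = Fintype.card γ * n := by simp [Finset.card_univ, mul_comm]

lemma main_aux {m k : ℕ} (hm : 3 ≤ m) (F : Finset (Fin m → Fin k))
    (j : Fin m → Fin k → Fin m) (v : Fin m → Fin k → Fin k)
    (hjne : ∀ i a, j i a ≠ i)
    (hdec : ∀ x ∈ F, ∀ i : Fin m, x (j i (x i)) = v i (x i)) :
    F.card ≤ (m + 1) * k ^ (m - 2) := by
  classical
  set z0 : Fin m := ⟨0, by omega⟩ with hz0def
  obtain ⟨ip, hip0, hipne⟩ : ∃ ip : Fin m → Fin m, (∀ i, ip i ≠ z0) ∧ (∀ i, ip i ≠ i) := by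
    refine ⟨fun i => if i = ⟨1, by omega⟩ then ⟨2, by omega⟩ else ⟨1, by omega⟩, ?_, ?_⟩ <;>
      intro i <;> by_cases hi : i = (⟨1, by omega⟩ : Fin m) <;>
      simp_all [hz0def, Fin.ext_iff] <;> omega
  have key : ∀ x ∈ F, x (j z0 (x z0)) = v z0 (x z0) := fun x hx => hdec x hx z0
  set PA : (Fin m → Fin k) → Prop := fun x => j (j z0 (x z0)) (v z0 (x z0)) ≠ z0 with hPA
  set PB : (Fin m → Fin k) → Prop := fun x =>
    j (ip (j z0 (x z0))) (x (ip (j z0 (x z0)))) = z0 ∨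
    j (ip (j z0 (x z0))) (x (ip (j z0 (x z0)))) = j z0 (x z0) with hPB
  -- Case A bound
  have hA : (F.filter PA).card ≤ k ^ (m - 2) := by
    have h1 : ∀ a : Fin k, ((F.filter PA).filter (fun x => x z0 = a)).card ≤ k ^ (m - 3) := by
      intro a
      set T := (F.filter PA).filter (fun x => x z0 = a) with hT
      rcases T.eq_empty_or_nonempty with he | ⟨w, hw⟩
      · simp [he]
      · have hw0 := Finset.mem_filter.1 hw
        have hw1 := Finset.mem_filter.1 hw0.1
        have hi : j z0 a ≠ z0 := hjne z0 a
        have hi2i : j (j z0 a) (v z0 a) ≠ j z0 a := hjne (j z0 a) (v z0 a)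
        have hi2z : j (j z0 a) (v z0 a) ≠ z0 := by
          have h := hw1.2
          simp only [hPA] at h
          rwa [hw0.2] at h
        have hs : ({z0, j z0 a, j (j z0 a) (v z0 a)} : Finset (Fin m)).card = 3 := by
          rw [Finset.card_insert_of_notMem (by simp [Ne.symm hi, Ne.symm hi2z]),
            Finset.card_insert_of_notMem (by simp [Ne.symm hi2i]), Finset.card_singleton]
        calc T.card ≤ k ^ (m - ({z0, j z0 a, j (j z0 a) (v z0 a)} : Finset (Fin m)).card) := by
              apply restrict_le
              intro x hx y hy hagree
              have hx0 := Finset.mem_filter.1 hx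
              have hx1 := Finset.mem_filter.1 hx0.1
              have hy0 := Finset.mem_filter.1 hy
              have hy1 := Finset.mem_filter.1 hy0.1
              have hxF := hx1.1
              have hyF := hy1.1
              have hxa : x z0 = a := hx0.2
              have hya : y z0 = a := hy0.2
              have hxi : x (j z0 a) = v z0 a := by
                have h := key x hxF; rwa [hxa] at h
              have hyi : y (j z0 a) = v z0 a := by
                have h := key y hyF; rwa [hya] at h
              have hxi2 : x (j (j z0 a) (v z0 a)) = v (j z0 a) (v z0 a) := by
                have h := hdec x hxF (j z0 a); rwa [hxi] at h
              have hyi2 : y (j (j z0 a) (v z0 a)) = v (j z0 a) (v z0 a) := by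
                have h := hdec y hyF (j z0 a); rwa [hyi] at h
              funext p
              by_cases hp0 : p = z0
              · rw [hp0, hxa, hya]
              · by_cases hp1 : p = j z0 a
                · rw [hp1, hxi, hyi]
                · by_cases hp2 : p = j (j z0 a) (v z0 a)
                  · rw [hp2, hxi2, hyi2]
                  · exact hagree p (by simp [hp0, hp1, hp2])
          _ = k ^ (m - 3) := by rw [hs]
    calc (F.filter PA).card ≤ Fintype.card (Fin k) * k ^ (m - 3) :=
          fiber_le _ (fun x => x z0) _ h1
      _ = k ^ (m - 2) := by
          rw [Fintype.card_fin, ← pow_succ']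
          congr 1
          omega
  -- Case B bound
  have hB : ((F.filter (fun x => ¬ PA x)).filter PB).card ≤ (m - 1) * k ^ (m - 2) := by
    set S := (F.filter (fun x => ¬ PA x)).filter PB with hS
    rw [Finset.card_eq_sum_card_fiberwise
      (f := fun x => j z0 (x z0)) (t := Finset.univ.erase z0)
      (fun x _ => Finset.mem_erase.2 ⟨hjne z0 (x z0), Finset.mem_univ _⟩)]
    have hper : ∀ i ∈ Finset.univ.erase z0,
        (S.filter (fun x => j z0 (x z0) = i)).card ≤ k ^ (m - 2) := by
      intro i hi
      have hiz : i ≠ z0 := (Finset.mem_erase.1 hi).1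
      have hs : ({z0, i} : Finset (Fin m)).card = 2 := by
        rw [Finset.card_insert_of_notMem (by simp [Ne.symm hiz]), Finset.card_singleton]
      calc (S.filter (fun x => j z0 (x z0) = i)).card
          ≤ k ^ (m - ({z0, i} : Finset (Fin m)).card) := by
            apply restrict_le
            intro x hx y hy hagree
            have hx0 := Finset.mem_filter.1 hx
            have hx1 := Finset.mem_filter.1 hx0.1
            have hx2 := Finset.mem_filter.1 hx1.1
            have hy0 := Finset.mem_filter.1 hy
            have hy1 := Finset.mem_filter.1 hy0.1
            have hy2 := Finset.mem_filter.1 hy1.1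
            have hxF := hx2.1
            have hyF := hy2.1
            have hxii : j z0 (x z0) = i := hx0.2
            have hyii : j z0 (y z0) = i := hy0.2
            have hipmem : ip i ∉ ({z0, i} : Finset (Fin m)) := by
              simp [hip0 i, hipne i]
            have hb : x (ip i) = y (ip i) := hagree (ip i) hipmem
            have hxd : x (j (ip i) (x (ip i))) = v (ip i) (x (ip i)) := hdec x hxF (ip i)
            have hyd : y (j (ip i) (y (ip i))) = v (ip i) (y (ip i)) := hdec y hyF (ip i)
            have hxB := hx1.2
            simp only [hPB] at hxB
            rw [hxii] at hxB
            have hmain : x z0 = y z0 ∧ x i = y i := by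
              rcases hxB with hc1 | hc2
              · -- decoded coordinate is z0
                have hc1y : j (ip i) (y (ip i)) = z0 := by rw [← hb]; exact hc1
                have hxz : x z0 = v (ip i) (x (ip i)) := by rwa [hc1] at hxd
                have hyz : y z0 = v (ip i) (y (ip i)) := by rwa [hc1y] at hyd
                have h0 : x z0 = y z0 := by rw [hxz, hyz, hb]
                have hxi : x i = v z0 (x z0) := by
                  have h := key x hxF; rwa [hxii] at h
                have hyi : y i = v z0 (y z0) := by
                  have h := key y hyF; rwa [hyii] at h
                exact ⟨h0, by rw [hxi, hyi, h0]⟩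
              · -- decoded coordinate is i
                have hc2y : j (ip i) (y (ip i)) = i := by rw [← hb]; exact hc2
                have hxi : x i = v (ip i) (x (ip i)) := by rwa [hc2] at hxd
                have hyi : y i = v (ip i) (y (ip i)) := by rwa [hc2y] at hyd
                have h1 : x i = y i := by rw [hxi, hyi, hb]
                have hxA : j (j z0 (x z0)) (v z0 (x z0)) = z0 := by
                  have h := hx2.2
                  simp only [hPA, ne_eq, not_not] at h
                  exact h
                have hyA : j (j z0 (y z0)) (v z0 (y z0)) = z0 := by
                  have h := hy2.2
                  simp only [hPA, ne_eq, not_not] at h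
                  exact h
                have hxiv : x (j z0 (x z0)) = v z0 (x z0) := key x hxF
                have hyiv : y (j z0 (y z0)) = v z0 (y z0) := key y hyF
                have hxiv' : x i = v z0 (x z0) := by rw [← hxii]; exact hxiv
                have hyiv' : y i = v z0 (y z0) := by rw [← hyii]; exact hyiv
                have hxcyc : x (j (j z0 (x z0)) (v z0 (x z0))) =
                    v (j z0 (x z0)) (v z0 (x z0)) := by
                  have h := hdec x hxF (j z0 (x z0))
                  rwa [hxiv] at h
                have hycyc : y (j (j z0 (y z0)) (v z0 (y z0))) =
                    v (j z0 (y z0)) (v z0 (y z0)) := by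
                  have h := hdec y hyF (j z0 (y z0))
                  rwa [hyiv] at h
                have hxz : x z0 = v (j z0 (x z0)) (v z0 (x z0)) := by rwa [hxA] at hxcyc
                have hyz : y z0 = v (j z0 (y z0)) (v z0 (y z0)) := by rwa [hyA] at hycyc
                have hxz2 : x z0 = v i (x i) := by rw [hxz, hxii, ← hxiv']
                have hyz2 : y z0 = v i (y i) := by rw [hyz, hyii, ← hyiv']
                exact ⟨by rw [hxz2, hyz2, h1], h1⟩
            funext p
            by_cases hp0 : p = z0
            · rw [hp0]; exact hmain.1
            · by_cases hp1 : p = i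
              · rw [hp1]; exact hmain.2
              · exact hagree p (by simp [hp0, hp1])
        _ = k ^ (m - 2) := by rw [hs]
    calc ∑ i ∈ Finset.univ.erase z0, (S.filter (fun x => j z0 (x z0) = i)).card
        ≤ ∑ _i ∈ Finset.univ.erase z0, k ^ (m - 2) := Finset.sum_le_sum hper
      _ = (m - 1) * k ^ (m - 2) := by
          rw [Finset.sum_const, smul_eq_mul,
            Finset.card_erase_of_mem (Finset.mem_univ _), Finset.card_univ, Fintype.card_fin]
  -- Case C bound
  have hC : ((F.filter (fun x => ¬ PA x)).filter (fun x => ¬ PB x)).card ≤ k ^ (m - 2) := by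
    set S := (F.filter (fun x => ¬ PA x)).filter (fun x => ¬ PB x) with hS
    rcases S.eq_empty_or_nonempty with he | ⟨w, hw⟩
    · simp [he]
    · have hw0 := Finset.mem_filter.1 hw
      have hwB := hw0.2
      simp only [hPB, not_or] at hwB
      have hm4 : 4 ≤ m := by
        have d1 : j z0 (w z0) ≠ z0 := hjne z0 (w z0)
        have d2 : ip (j z0 (w z0)) ≠ z0 := hip0 _
        have d3 : ip (j z0 (w z0)) ≠ j z0 (w z0) := hipne _
        have d4 : j (ip (j z0 (w z0))) (w (ip (j z0 (w z0)))) ≠ ip (j z0 (w z0)) := hjne _ _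
        have d5 := hwB.1
        have d6 := hwB.2
        have hcard : ({z0, j z0 (w z0), ip (j z0 (w z0)),
            j (ip (j z0 (w z0))) (w (ip (j z0 (w z0))))} : Finset (Fin m)).card = 4 := by
          rw [Finset.card_insert_of_notMem (by simp [Ne.symm d1, Ne.symm d2, Ne.symm d5]),
            Finset.card_insert_of_notMem (by simp [Ne.symm d3, Ne.symm d6]),
            Finset.card_insert_of_notMem (by simp [Ne.symm d4]),
            Finset.card_singleton]
        calc 4 = _ := hcard.symm
          _ ≤ (Finset.univ : Finset (Fin m)).card := Finset.card_le_univ _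
          _ = m := by rw [Finset.card_univ, Fintype.card_fin]
      have h1 : ∀ gv : Fin k × Fin k,
          (S.filter (fun x => (x z0, x (ip (j z0 (x z0)))) = gv)).card ≤ k ^ (m - 4) := by
        rintro ⟨a, b⟩
        set T := S.filter (fun x => (x z0, x (ip (j z0 (x z0)))) = (a, b)) with hT
        rcases T.eq_empty_or_nonempty with he' | ⟨u, hu⟩
        · simp [he']
        · have hu0 := Finset.mem_filter.1 hu
          have hu1 := Finset.mem_filter.1 hu0.1
          have hua : u z0 = a := (Prod.ext_iff.1 hu0.2).1
          have hub : u (ip (j z0 a)) = b := by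
            have h := (Prod.ext_iff.1 hu0.2).2
            rwa [hua] at h
          have huB := hu1.2
          simp only [hPB, not_or] at huB
          rw [hua, hub] at huB
          have d1 : j z0 a ≠ z0 := hjne z0 a
          have d2 : ip (j z0 a) ≠ z0 := hip0 _
          have d3 : ip (j z0 a) ≠ j z0 a := hipne _
          have d4 : j (ip (j z0 a)) b ≠ ip (j z0 a) := hjne _ b
          have d5 := huB.1
          have d6 := huB.2
          have hcard : ({z0, j z0 a, ip (j z0 a), j (ip (j z0 a)) b} :
              Finset (Fin m)).card = 4 := by
            rw [Finset.card_insert_of_notMem (by simp [Ne.symm d1, Ne.symm d2, Ne.symm d5]),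
              Finset.card_insert_of_notMem (by simp [Ne.symm d3, Ne.symm d6]),
              Finset.card_insert_of_notMem (by simp [Ne.symm d4]),
              Finset.card_singleton]
          calc T.card
              ≤ k ^ (m - ({z0, j z0 a, ip (j z0 a), j (ip (j z0 a)) b} :
                  Finset (Fin m)).card) := by
                apply restrict_le
                intro x hx y hy hagree
                have hx0 := Finset.mem_filter.1 hx
                have hx1 := Finset.mem_filter.1 hx0.1
                have hx2 := Finset.mem_filter.1 hx1.1
                have hy0 := Finset.mem_filter.1 hy
                have hy1 := Finset.mem_filter.1 hy0.1
                have hy2 := Finset.mem_filter.1 hy1.1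
                have hxF := hx2.1
                have hyF := hy2.1
                have hxa : x z0 = a := (Prod.ext_iff.1 hx0.2).1
                have hya : y z0 = a := (Prod.ext_iff.1 hy0.2).1
                have hxb : x (ip (j z0 a)) = b := by
                  have h := (Prod.ext_iff.1 hx0.2).2
                  rwa [hxa] at h
                have hyb : y (ip (j z0 a)) = b := by
                  have h := (Prod.ext_iff.1 hy0.2).2
                  rwa [hya] at h
                have hxi : x (j z0 a) = v z0 a := by
                  have h := key x hxF; rwa [hxa] at h
                have hyi : y (j z0 a) = v z0 a := by
                  have h := key y hyF; rwa [hya] at h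
                have hxj : x (j (ip (j z0 a)) b) = v (ip (j z0 a)) b := by
                  have h := hdec x hxF (ip (j z0 a)); rwa [hxb] at h
                have hyj : y (j (ip (j z0 a)) b) = v (ip (j z0 a)) b := by
                  have h := hdec y hyF (ip (j z0 a)); rwa [hyb] at h
                funext p
                by_cases hp0 : p = z0
                · rw [hp0, hxa, hya]
                · by_cases hp1 : p = j z0 a
                  · rw [hp1, hxi, hyi]
                  · by_cases hp2 : p = ip (j z0 a)
                    · rw [hp2, hxb, hyb]
                    · by_cases hp3 : p = j (ip (j z0 a)) b
                      · rw [hp3, hxj, hyj]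
                      · exact hagree p (by simp [hp0, hp1, hp2, hp3])
            _ = k ^ (m - 4) := by rw [hcard]
      calc S.card ≤ Fintype.card (Fin k × Fin k) * k ^ (m - 4) :=
            fiber_le _ (fun x => (x z0, x (ip (j z0 (x z0))))) _ h1
        _ = k ^ (m - 2) := by
            simp only [Fintype.card_prod, Fintype.card_fin,
              show m - 2 = 2 + (m - 4) from by omega, pow_add]
            ring
  -- Assembly
  have hsplit1 : (F.filter PA).card + (F.filter (fun x => ¬ PA x)).card = F.card :=
    Finset.card_filter_add_card_filter_not (p := PA)
  have hsplit2 : ((F.filter (fun x => ¬ PA x)).filter PB).card +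
      ((F.filter (fun x => ¬ PA x)).filter (fun x => ¬ PB x)).card
      = (F.filter (fun x => ¬ PA x)).card :=
    Finset.card_filter_add_card_filter_not (p := PB)
  calc F.card = (F.filter PA).card + (((F.filter (fun x => ¬ PA x)).filter PB).card +
        ((F.filter (fun x => ¬ PA x)).filter (fun x => ¬ PB x)).card) := by
        rw [hsplit2, hsplit1]
    _ ≤ k ^ (m - 2) + ((m - 1) * k ^ (m - 2) + k ^ (m - 2)) :=
        Nat.add_le_add hA (Nat.add_le_add hB hC)
    _ = (1 + ((m - 1) + 1)) * k ^ (m - 2) := by ring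
    _ = (m + 1) * k ^ (m - 2) := by
        rw [show 1 + ((m - 1) + 1) = m + 1 from by omega]

theorem stmt_8 (m k t : ℕ) (hm : 3 ≤ m) (hk : 2 ≤ k)
    (E : (Fin m → Fin k) → Fin t)
    (hvp : ∀ (i : Fin m) (c : Fin t) (a : Fin k),
      ∃ j ≠ i, ∃ v : Fin k, ∀ x : Fin m → Fin k, E x = c → x i = a → x j = v) :
    ∀ c : Fin t, (Finset.univ.filter (fun x => E x = c)).card ≤ (m + 1) * k ^ (m - 2) := by
  classical
  choose J hJne V hV using hvp
  intro c
  exact main_aux hm (Finset.univ.filter (fun x => E x = c))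
    (fun i a => J i c a) (fun i a => V i c a)
    (fun i a => hJne i c a)
    (fun x hx i => hV i c (x i) x (by simpa using (Finset.mem_filter.1 hx).2) rfl)
end

section
/- Let m ≥ 3, k ≥ 2, and let E : (Fin m → Fin k) → Fin t satisfy the very-pliable decoding condition for receivers {1}, ..., {m} (receiver i knows only message i). Then t ≥ k² / (m+1), and consequently log t / log k ≥ 2 - log(m+1)/log k. -/
/-!
Fix a codeword `c`. Decodability turns the fibre `E⁻¹(c)` into a set of words obeying a forcing
rule: `x i = a` forces `x (J i a) = V i a`, with `J i a ≠ i`. Following the rule from a coordinate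
`i₀` pins a second and usually a third coordinate, so these words number at most
`k * k^(m-3) = k^(m-2)`. The exception is a chain that returns to `i₀` after two steps, through
some `j`; slicing those words by the value `b` at a third coordinate `ℓ`, either the forced
coordinate `J ℓ b` is `i₀` or `j`, and then `(x i₀, x j)` is determined, or it pins a fourth
coordinate. This gives `k^(m-2)` for each of the `m - 1` choices of `j`, hence
`|E⁻¹(c)| ≤ m k^(m-2)`, and counting all `k^m` words gives `k² ≤ m t`.
-/

open Finset Fintype

section Pinning

variable {ι α : Type*} [Fintype ι] [DecidableEq ι] [Fintype α]

theorem card_le_pow_of_forall_eq_on {S : Finset (ι → α)} {P : Finset ι}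
    (hS : ∀ x ∈ S, ∀ y ∈ S, ∀ i ∈ P, x i = y i) :
    #S ≤ card α ^ (card ι - #P) := by
  have hinj : Set.InjOn (fun (x : ι → α) (i : ↥Pᶜ) => x i) (S : Set (ι → α)) := by
    intro x hx y hy hxy
    funext i
    by_cases hi : i ∈ P
    · exact hS x hx y hy i hi
    · exact congrFun hxy ⟨i, mem_compl.2 hi⟩
  calc #S ≤ #(univ : Finset (↥Pᶜ → α)) :=
        card_le_card_of_injOn _ (fun _ _ => mem_coe.2 (mem_univ _)) hinj
    _ = card α ^ (card ι - #P) := by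
        rw [card_univ, card_fun, card_coe, card_compl]

theorem card_le_pow_sub_three_of_forall_eq {S : Finset (ι → α)} {p q r : ι}
    (hpq : p ≠ q) (hpr : p ≠ r) (hqr : q ≠ r)
    (hS : ∀ x ∈ S, ∀ y ∈ S, x p = y p ∧ x q = y q ∧ x r = y r) :
    #S ≤ card α ^ (card ι - 3) := by
  rw [← card_eq_three.2 ⟨p, q, r, hpq, hpr, hqr, rfl⟩]
  refine card_le_pow_of_forall_eq_on fun x hx y hy => ?_
  simp only [forall_mem_insert, mem_singleton, forall_eq]
  exact hS x hx y hy

end Pinning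

section Forcing

variable {ι α : Type*} [Fintype ι] [DecidableEq ι] [Fintype α] [DecidableEq α]

/-- Receiver `i`, knowing its message `a` and the codeword, decodes message `J i a` as `V i a`. -/
def Obeys (J : ι → α → ι) (V : ι → α → α) (x : ι → α) : Prop :=
  ∀ i, x (J i (x i)) = V i (x i)

instance (J : ι → α → ι) (V : ι → α → α) : DecidablePred (Obeys J V) :=
  fun _ => Fintype.decidableForallFintype

variable {J : ι → α → ι} {V : ι → α → α}

theorem card_obeys_of_not_return_le (hJ : ∀ i a, J i a ≠ i) (hι : 3 ≤ card ι) (i₀ : ι)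
    {S : Finset (ι → α)}
    (hS : ∀ x ∈ S, Obeys J V x ∧ J (J i₀ (x i₀)) (V i₀ (x i₀)) ≠ i₀) :
    #S ≤ card α ^ (card ι - 2) := by
  set T : Finset α := {a | J (J i₀ a) (V i₀ a) ≠ i₀}
  have hfiber : ∀ a ∈ T, #{x ∈ S | x i₀ = a} ≤ card α ^ (card ι - 3) := by
    intro a ha
    have hr : J (J i₀ a) (V i₀ a) ≠ i₀ := (mem_filter.1 ha).2
    have hforced : ∀ x ∈ {x ∈ S | x i₀ = a},
        x i₀ = a ∧ x (J i₀ a) = V i₀ a ∧ x (J (J i₀ a) (V i₀ a)) = V (J i₀ a) (V i₀ a) := by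
      intro x hx
      obtain ⟨hxS, rfl⟩ := mem_filter.1 hx
      have hobeys := (hS x hxS).1
      exact ⟨rfl, hobeys i₀, hobeys i₀ ▸ hobeys (J i₀ (x i₀))⟩
    refine card_le_pow_sub_three_of_forall_eq (hJ i₀ a).symm hr.symm (hJ _ _).symm
      fun x hx y hy => ?_
    obtain ⟨hx₁, hx₂, hx₃⟩ := hforced x hx
    obtain ⟨hy₁, hy₂, hy₃⟩ := hforced y hy
    exact ⟨hx₁.trans hy₁.symm, hx₂.trans hy₂.symm, hx₃.trans hy₃.symm⟩
  calc #S ≤ card α ^ (card ι - 3) * #T :=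
        card_le_mul_card_image_of_maps_to (f := fun x => x i₀)
          (fun x hx => mem_filter.2 ⟨mem_univ _, (hS x hx).2⟩) _ hfiber
    _ ≤ card α ^ (card ι - 3) * card α := Nat.mul_le_mul_left _ (card_le_univ T)
    _ = card α ^ (card ι - 2) := by rw [← pow_succ]; congr 1; omega


theorem card_obeys_of_return_of_eq_le (hJ : ∀ i a, J i a ≠ i) {i₀ j ℓ : ι} (hj : j ≠ i₀)
    (hℓ₀ : ℓ ≠ i₀) (hℓj : ℓ ≠ j) (b : α) {S : Finset (ι → α)}
    (hS : ∀ x ∈ S, Obeys J V x ∧ J i₀ (x i₀) = j ∧ J j (x j) = i₀ ∧ x ℓ = b) :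
    #S ≤ card α ^ (card ι - 3) := by
  have hforced : ∀ x ∈ S,
      x j = V i₀ (x i₀) ∧ x i₀ = V j (x j) ∧ x ℓ = b ∧ x (J ℓ b) = V ℓ b := by
    intro x hx
    obtain ⟨hobeys, hi₀, hj', rfl⟩ := hS x hx
    exact ⟨hi₀ ▸ hobeys i₀, hj' ▸ hobeys j, rfl, hobeys ℓ⟩
  rcases eq_or_ne (J ℓ b) i₀ with hw | hw
  · refine card_le_pow_sub_three_of_forall_eq hj.symm hℓ₀.symm hℓj.symm fun x hx y hy => ?_
    obtain ⟨hx₁, -, hx₃, hx₄⟩ := hforced x hx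
    obtain ⟨hy₁, -, hy₃, hy₄⟩ := hforced y hy
    rw [hw] at hx₄ hy₄
    exact ⟨hx₄.trans hy₄.symm, by rw [hx₁, hy₁, hx₄, hy₄], hx₃.trans hy₃.symm⟩
  rcases eq_or_ne (J ℓ b) j with hw' | hw'
  · refine card_le_pow_sub_three_of_forall_eq hj.symm hℓ₀.symm hℓj.symm fun x hx y hy => ?_
    obtain ⟨-, hx₂, hx₃, hx₄⟩ := hforced x hx
    obtain ⟨-, hy₂, hy₃, hy₄⟩ := hforced y hy
    rw [hw'] at hx₄ hy₄
    exact ⟨by rw [hx₂, hy₂, hx₄, hy₄], hx₄.trans hy₄.symm, hx₃.trans hy₃.symm⟩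
  -- Otherwise a fourth coordinate `J ℓ b` is pinned, which pays for the free value of `x i₀`.
  have hP : #({i₀, j, ℓ, J ℓ b} : Finset ι) = 4 := by
    rw [card_insert_of_notMem (by simp [hj.symm, hℓ₀.symm, hw.symm]),
      card_eq_three.2 ⟨j, ℓ, J ℓ b, hℓj.symm, hw'.symm, (hJ ℓ b).symm, rfl⟩]
  have hι : 4 ≤ card ι := hP ▸ card_le_univ _
  have hfiber : ∀ a ∈ (univ : Finset α), #{x ∈ S | x i₀ = a} ≤ card α ^ (card ι - 4) := by
    intro a _
    rw [← hP]
    refine card_le_pow_of_forall_eq_on fun x hx y hy => ?_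
    obtain ⟨hxS, hxa⟩ := mem_filter.1 hx
    obtain ⟨hyS, hya⟩ := mem_filter.1 hy
    obtain ⟨hx₁, -, hx₃, hx₄⟩ := hforced x hxS
    obtain ⟨hy₁, -, hy₃, hy₄⟩ := hforced y hyS
    simp only [forall_mem_insert, mem_singleton, forall_eq]
    exact ⟨hxa.trans hya.symm, by rw [hx₁, hy₁, hxa, hya], hx₃.trans hy₃.symm,
      hx₄.trans hy₄.symm⟩
  calc #S ≤ card α ^ (card ι - 4) * #(univ : Finset α) :=
        card_le_mul_card_image_of_maps_to (f := fun x => x i₀) (fun _ _ => mem_univ _) _ hfiber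
    _ = card α ^ (card ι - 3) := by rw [card_univ, ← pow_succ]; congr 1; omega

theorem card_obeys_of_return_le (hJ : ∀ i a, J i a ≠ i) (hι : 3 ≤ card ι) {i₀ j : ι}
    (hj : j ≠ i₀) {S : Finset (ι → α)}
    (hS : ∀ x ∈ S, Obeys J V x ∧ J i₀ (x i₀) = j ∧ J j (x j) = i₀) :
    #S ≤ card α ^ (card ι - 2) := by
  obtain ⟨ℓ, -, hℓ⟩ := exists_mem_notMem_of_card_lt_card (s := {i₀, j}) (t := univ)
    (by rw [card_univ]; exact card_le_two.trans_lt (by omega))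
  simp only [mem_insert, mem_singleton, not_or] at hℓ
  calc #S ≤ card α ^ (card ι - 3) * #(univ : Finset α) :=
        card_le_mul_card_image_of_maps_to (f := fun x => x ℓ) (fun _ _ => mem_univ _) _
          fun b _ => card_obeys_of_return_of_eq_le hJ hj hℓ.1 hℓ.2 b fun x hx => by
            obtain ⟨hxS, hxb⟩ := mem_filter.1 hx
            exact ⟨(hS x hxS).1, (hS x hxS).2.1, (hS x hxS).2.2, hxb⟩
    _ = card α ^ (card ι - 2) := by rw [card_univ, ← pow_succ]; congr 1; omega

theorem card_obeys_le (hJ : ∀ i a, J i a ≠ i) (hι : 3 ≤ card ι) :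
    #({x | Obeys J V x} : Finset (ι → α)) ≤ card ι * card α ^ (card ι - 2) := by
  obtain ⟨i₀⟩ : Nonempty ι := card_pos_iff.1 (by omega)
  set S : Finset (ι → α) := {x | Obeys J V x}
  have hobeys : ∀ x ∈ S, Obeys J V x := fun x hx => (mem_filter.1 hx).2
  set Returns : (ι → α) → Prop := fun x => J (J i₀ (x i₀)) (V i₀ (x i₀)) = i₀
  have hreturn : #{x ∈ S | Returns x} ≤ card α ^ (card ι - 2) * #(univ.erase i₀) := by
    refine card_le_mul_card_image_of_maps_to (f := fun x => J i₀ (x i₀))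
      (fun x _ => mem_erase.2 ⟨hJ _ _, mem_univ _⟩) _ fun j hj =>
        card_obeys_of_return_le (V := V) hJ hι (ne_of_mem_erase hj) fun x hx => ?_
    obtain ⟨hxR, hxj⟩ := mem_filter.1 hx
    obtain ⟨hxS, hret⟩ := mem_filter.1 hxR
    subst hxj
    exact ⟨hobeys x hxS, rfl, by rw [hobeys x hxS i₀]; exact hret⟩
  have hnot : #{x ∈ S | ¬ Returns x} ≤ card α ^ (card ι - 2) :=
    card_obeys_of_not_return_le hJ hι i₀ fun x hx =>
      ⟨hobeys x (mem_filter.1 hx).1, (mem_filter.1 hx).2⟩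
  rw [card_erase_of_mem (mem_univ _), card_univ] at hreturn
  calc #S = #{x ∈ S | Returns x} + #{x ∈ S | ¬ Returns x} :=
        (card_filter_add_card_filter_not Returns).symm
    _ ≤ card α ^ (card ι - 2) * (card ι - 1) + card α ^ (card ι - 2) := add_le_add hreturn hnot
    _ = card ι * card α ^ (card ι - 2) := by
        rw [← mul_add_one, Nat.sub_add_cancel (by omega), mul_comm]

end Forcing

theorem two_sub_log_div_log_le {k c t : ℝ} (hk : 1 < k) (hc : 0 < c) (ht : 0 < t)
    (h : k ^ 2 ≤ c * t) :
    2 - Real.log c / Real.log k ≤ Real.log t / Real.log k := by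
  have hlog : 2 * Real.log k ≤ Real.log c + Real.log t := by
    calc 2 * Real.log k = Real.log (k ^ 2) := by rw [Real.log_pow, Nat.cast_ofNat]
      _ ≤ Real.log (c * t) := Real.log_le_log (by positivity) h
      _ = Real.log c + Real.log t := Real.log_mul hc.ne' ht.ne'
  rw [sub_le_iff_le_add, ← add_div, le_div_iff₀ (Real.log_pos hk)]
  linarith

theorem stmt_9 (m k t : ℕ) (hm : 3 ≤ m) (hk : 2 ≤ k)
    (E : (Fin m → Fin k) → Fin t)
    (hvp : ∀ (i : Fin m) (c : Fin t) (a : Fin k),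
      ∃ j ≠ i, ∃ v : Fin k, ∀ x : Fin m → Fin k, E x = c → x i = a → x j = v) :
    k ^ 2 ≤ (m + 1) * t ∧
      2 - Real.log ((m : ℝ) + 1) / Real.log (k : ℝ) ≤ Real.log (t : ℝ) / Real.log (k : ℝ) := by
  choose J hJ V hV using hvp
  have hfiber : ∀ c ∈ (univ : Finset (Fin t)), #{x | E x = c} ≤ m * k ^ (m - 2) := by
    intro c _
    calc #{x | E x = c} ≤ #{x | Obeys (J · c) (V · c) x} :=
          card_le_card fun x hx =>
            mem_filter.2 ⟨mem_univ _, fun i => hV i c _ x (mem_filter.1 hx).2 rfl⟩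
      _ ≤ m * k ^ (m - 2) := by
          simpa using card_obeys_le (fun i a => hJ i c a) (by simpa using hm)
  have hcount : k ^ 2 * k ^ (m - 2) ≤ m * t * k ^ (m - 2) := by
    rw [← pow_add, Nat.add_sub_cancel' (by omega)]
    simpa [mul_right_comm] using
      card_le_mul_card_image_of_maps_to (f := E) (fun _ _ => mem_univ _) _ hfiber
  have hk2 : k ^ 2 ≤ (m + 1) * t :=
    (Nat.le_of_mul_le_mul_right hcount (by positivity)).trans (Nat.mul_le_mul_right _ m.le_succ)
  have ht : 0 < t := Nat.pos_of_ne_zero fun h => by simp [h] at hk2; omega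
  exact ⟨hk2, two_sub_log_div_log_le (by exact_mod_cast hk) (by positivity)
    (by exact_mod_cast ht) (by exact_mod_cast hk2)⟩
end

section
/- For the instance m = 3 with receivers {1}, {2}, {3}: liminf over k → ∞ of α_k equals 2, while α_3 ≤ log 7 / log 3 < 2. Hence inf_k α_k < liminf_{k→∞} α_k, i.e., the optimal finite-alphabet rate is strictly smaller than the asymptotic rate. -/
/-- The very-pliable decoding condition for the instance with `m = 3` messages over
alphabet `Fin k` and three receivers, receiver `i` knowing only message `i`. -/
def IsVPCode3 (k t : ℕ) (E : (Fin 3 → Fin k) → Fin t) : Prop :=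
  ∀ (i : Fin 3) (c : Fin t) (a : Fin k),
    ∃ j ≠ i, ∃ v : Fin k, ∀ x : Fin 3 → Fin k, E x = c → x i = a → x j = v

/-- The optimal very-pliable rate `α_k` for this instance. -/
noncomputable def alpha3 (k : ℕ) : ℝ :=
  sInf {r : ℝ | ∃ (t : ℕ) (E : (Fin 3 → Fin k) → Fin t),
    IsVPCode3 k t E ∧ r = Real.log (t : ℝ) / Real.log (k : ℝ)}

/-!
A fiber of a very-pliable code on `α³` has at most `3 |α|` words. Indeed, every slice
`{x_0 = a}` of the fiber is either a single word or has `x_1` or `x_2` constant; the slices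
of the first kind are told apart by `x_0`, and on the union of the nontrivial slices with
`x_p` constant the words are told apart by the remaining coordinate `x_q`, since pliability
at `x_q` (and then at `x_p`) forces two words with the same `x_q` into the same slice.
Hence `k³ ≤ 3k · t`, i.e. `α_k ≥ 2 - log 3 / log k`, while the code
`x ↦ (x_0 + x_1, x_1 + x_2)` gives `α_k ≤ 2`; so `α_k → 2`. An explicit code with `7` words
for `k = 3` gives `α_3 ≤ log 7 / log 3 < 2`.
-/

open Finset Filter Topology Real

lemma fin3_eq_or_eq_or_eq_of_ne {i j l : Fin 3} (hij : i ≠ j) (hil : i ≠ l) (hjl : j ≠ l)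
    (m : Fin 3) : m = i ∨ m = j ∨ m = l := by
  revert i j l m
  decide

lemma fin3_ext_of_ne {α : Type*} {i j l : Fin 3} (hij : i ≠ j) (hil : i ≠ l) (hjl : j ≠ l)
    {x y : Fin 3 → α} (hi : x i = y i) (hj : x j = y j) (hl : x l = y l) : x = y := by
  funext m
  rcases fin3_eq_or_eq_or_eq_of_ne hij hil hjl m with rfl | rfl | rfl <;> assumption

lemma Finset.card_filter_le_fintypeCard_of_injOn {β α : Type*} [Fintype α] (S : Finset β)
    (P : β → Prop) [DecidablePred P] (f : β → α) (hf : Set.InjOn f {x | x ∈ S ∧ P x}) :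
    #(S.filter P) ≤ Fintype.card α :=
  (card_le_card_of_injOn f (fun _ _ => mem_univ _)
    fun _ hx _ hy => hf (mem_filter.1 hx) (mem_filter.1 hy)).trans_eq card_univ

section VPSet

variable {α : Type*}

def IsVPSet (S : Finset (Fin 3 → α)) : Prop :=
  ∀ i a, ∃ j ≠ i, ∃ v, ∀ x ∈ S, x i = a → x j = v

variable {S : Finset (Fin 3 → α)} {i p q : Fin 3}

theorem IsVPSet.injOn_of_forall_slice_const (hS : IsVPSet S)
    (hip : i ≠ p) (hiq : i ≠ q) (hpq : p ≠ q) {A : Set α}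
    (hnontriv : ∀ a ∈ A, ∃ x ∈ S, ∃ y ∈ S, x i = a ∧ y i = a ∧ x ≠ y)
    (hconst : ∀ a ∈ A, ∀ x ∈ S, ∀ y ∈ S, x i = a → y i = a → x p = y p) :
    Set.InjOn (· q) {x | x ∈ S ∧ x i ∈ A} := by
  have same_slice_of_p : ∀ y ∈ S, y i ∈ A → ∀ x ∈ S, x p = y p → x i = y i := by
    intro y hy hyA x hx hxy
    obtain ⟨j, hj, w, hw⟩ := hS p (y p)
    rcases fin3_eq_or_eq_or_eq_of_ne hip hiq hpq j with rfl | rfl | rfl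
    · rw [hw x hx hxy, hw y hy rfl]
    · exact absurd rfl hj
    · -- otherwise `x_q` is constant too on the slice of `y`, which is then a single word
      obtain ⟨u, hu, v, hv, hui, hvi, huv⟩ := hnontriv _ hyA
      have hup := hconst _ hyA u hu y hy hui rfl
      have hvp := hconst _ hyA v hv y hy hvi rfl
      exact absurd (fin3_ext_of_ne hip hiq hpq (hui.trans hvi.symm) (hup.trans hvp.symm)
        ((hw u hu hup).trans (hw v hv hvp).symm)) huv
  rintro x ⟨hx, hxA⟩ y ⟨hy, hyA⟩ (hxy : x q = y q)
  have hi : x i = y i := by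
    obtain ⟨j, hj, w, hw⟩ := hS q (x q)
    rcases fin3_eq_or_eq_or_eq_of_ne hip hiq hpq j with rfl | rfl | rfl
    · rw [hw x hx rfl, hw y hy hxy.symm]
    · exact (same_slice_of_p x hx hxA y hy ((hw y hy hxy.symm).trans (hw x hx rfl).symm)).symm
    · exact absurd rfl hj
  exact fin3_ext_of_ne hip hiq hpq hi (hconst _ hxA x hx y hy rfl hi.symm) hxy

theorem IsVPSet.card_le [Fintype α] (hS : IsVPSet S) : #S ≤ 3 * Fintype.card α := by
  classical
  let Nontriv (a : α) : Prop := ∃ x ∈ S, ∃ y ∈ S, x 0 = a ∧ y 0 = a ∧ x ≠ y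
  let Const (p : Fin 3) (a : α) : Prop := ∀ x ∈ S, ∀ y ∈ S, x 0 = a → y 0 = a → x p = y p
  have h0 : #(S.filter fun x => ¬Nontriv (x 0)) ≤ Fintype.card α := by
    refine card_filter_le_fintypeCard_of_injOn S _ (· 0) ?_
    rintro x ⟨hx, hxN⟩ y ⟨hy, -⟩ (hxy : x 0 = y 0)
    by_contra hne
    exact hxN ⟨x, hx, y, hy, rfl, hxy.symm, hne⟩
  have h1 : #(S.filter fun x => Nontriv (x 0) ∧ Const 1 (x 0)) ≤ Fintype.card α :=
    card_filter_le_fintypeCard_of_injOn S _ (· 2) <|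
      hS.injOn_of_forall_slice_const (A := {a | Nontriv a ∧ Const 1 a}) (by decide) (by decide)
        (by decide) (fun _ h => h.1) (fun _ h => h.2)
  have h2 : #(S.filter fun x => Nontriv (x 0) ∧ Const 2 (x 0)) ≤ Fintype.card α :=
    card_filter_le_fintypeCard_of_injOn S _ (· 1) <|
      hS.injOn_of_forall_slice_const (A := {a | Nontriv a ∧ Const 2 a}) (by decide) (by decide)
        (by decide) (fun _ h => h.1) (fun _ h => h.2)
  have hcover : S ⊆ (S.filter fun x => ¬Nontriv (x 0)) ∪
      (S.filter fun x => Nontriv (x 0) ∧ Const 1 (x 0)) ∪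
      (S.filter fun x => Nontriv (x 0) ∧ Const 2 (x 0)) := by
    intro x hx
    simp only [mem_union, mem_filter, hx, true_and]
    by_cases hN : Nontriv (x 0)
    · obtain ⟨j, hj, v, hv⟩ := hS 0 (x 0)
      have hconst : Const j (x 0) := fun y hy z hz hy0 hz0 => (hv y hy hy0).trans (hv z hz hz0).symm
      rcases fin3_eq_or_eq_or_eq_of_ne (i := 0) (j := 1) (l := 2) (by decide) (by decide)
        (by decide) j with rfl | rfl | rfl
      · exact absurd rfl hj
      · exact Or.inl (Or.inr ⟨hN, hconst⟩)
      · exact Or.inr ⟨hN, hconst⟩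
    · exact Or.inl (Or.inl hN)
  calc #S ≤ _ := card_le_card hcover
    _ ≤ #(S.filter fun x => ¬Nontriv (x 0)) + #(S.filter fun x => Nontriv (x 0) ∧ Const 1 (x 0))
        + #(S.filter fun x => Nontriv (x 0) ∧ Const 2 (x 0)) :=
      (card_union_le _ _).trans (Nat.add_le_add_right (card_union_le _ _) _)
    _ ≤ 3 * Fintype.card α := by omega

end VPSet

section VPMap

variable {α β γ : Type*}

def IsVPMap (E : (Fin 3 → α) → β) : Prop :=
  ∀ i c a, ∃ j ≠ i, ∃ v, ∀ x, E x = c → x i = a → x j = v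

lemma isVPCode3_iff {k t : ℕ} {E : (Fin 3 → Fin k) → Fin t} : IsVPCode3 k t E ↔ IsVPMap E :=
  Iff.rfl

lemma IsVPMap.isVPSet_fiber [Fintype α] [DecidableEq β] {E : (Fin 3 → α) → β}
    (hE : IsVPMap E) (c : β) : IsVPSet (univ.filter fun x => E x = c) := by
  intro i a
  obtain ⟨j, hj, v, hv⟩ := hE i c a
  exact ⟨j, hj, v, fun x hx => hv x (mem_filter.1 hx).2⟩

theorem IsVPMap.card_pow_le [Fintype α] [Fintype β] {E : (Fin 3 → α) → β} (hE : IsVPMap E) :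
    Fintype.card α ^ 3 ≤ 3 * Fintype.card α * Fintype.card β := by
  classical
  simpa using card_le_mul_card_image_of_maps_to (s := univ) (t := univ) (f := E)
    (fun _ _ => mem_univ _) _ fun c _ => (hE.isVPSet_fiber c).card_le

lemma IsVPMap.equiv_comp {E : (Fin 3 → α) → β} (hE : IsVPMap E) (e : β ≃ γ) :
    IsVPMap (e ∘ E) := by
  intro i c a
  obtain ⟨j, hj, v, hv⟩ := hE i (e.symm c) a
  exact ⟨j, hj, v, fun x hx => hv x (e.symm_apply_eq.2 hx.symm).symm⟩

lemma isVPMap_add_pairs (G : Type*) [AddCommGroup G] :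
    IsVPMap fun x : Fin 3 → G => (x 0 + x 1, x 1 + x 2) := by
  intro i c a
  fin_cases i
  · exact ⟨1, by decide, c.1 - a, by rintro x rfl rfl; simp⟩
  · exact ⟨0, by decide, c.1 - a, by rintro x rfl rfl; simp⟩
  · exact ⟨1, by decide, c.2 - a, by rintro x rfl rfl; simp⟩

end VPMap

theorem sq_le_three_mul_of_isVPCode3 {k t : ℕ} (hk : 0 < k) {E : (Fin 3 → Fin k) → Fin t}
    (hE : IsVPCode3 k t E) : k ^ 2 ≤ 3 * t := by
  have h := (isVPCode3_iff.1 hE).card_pow_le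
  simp only [Fintype.card_fin] at h
  refine Nat.le_of_mul_le_mul_left ?_ hk
  calc k * k ^ 2 = k ^ 3 := by ring
    _ ≤ 3 * k * t := h
    _ = k * (3 * t) := by ring

theorem exists_isVPCode3_mul_self (k : ℕ) [NeZero k] : ∃ E, IsVPCode3 k (k * k) E :=
  ⟨_, (isVPMap_add_pairs (Fin k)).equiv_comp finProdFinEquiv⟩

def code7 : (Fin 3 → Fin 3) → Fin 7 := fun x =>
  ![0, 0, 0, 1, 2, 3, 1, 4, 5, 5, 1, 1, 5, 2, 3, 6, 4, 6, 2, 6, 2, 4, 6, 4, 3, 3, 5]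
    ⟨9 * x 0 + 3 * x 1 + x 2, by omega⟩

theorem isVPCode3_code7 : IsVPCode3 3 7 code7 := by
  unfold IsVPCode3
  decide

section Rates

def vpRates (k : ℕ) : Set ℝ :=
  {r | ∃ (t : ℕ) (E : (Fin 3 → Fin k) → Fin t), IsVPCode3 k t E ∧ r = log t / log k}

variable {k : ℕ} {r : ℝ}

lemma nonneg_of_mem_vpRates (hr : r ∈ vpRates k) : 0 ≤ r := by
  obtain ⟨t, E, -, rfl⟩ := hr
  exact div_nonneg (log_natCast_nonneg t) (log_natCast_nonneg k)

lemma two_mem_vpRates (hk : 2 ≤ k) : 2 ∈ vpRates k := by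
  have : NeZero k := ⟨by omega⟩
  obtain ⟨E, hE⟩ := exists_isVPCode3_mul_self k
  have hlog : log k ≠ 0 := (log_pos (by exact_mod_cast hk)).ne'
  refine ⟨k * k, E, hE, ?_⟩
  rw [Nat.cast_mul, log_mul (by positivity) (by positivity)]
  field_simp
  ring

lemma two_sub_le_of_mem_vpRates (hk : 2 ≤ k) (hr : r ∈ vpRates k) :
    2 - log 3 / log k ≤ r := by
  obtain ⟨t, E, hE, rfl⟩ := hr
  have hlogk : 0 < log k := log_pos (by exact_mod_cast hk)
  have hsqN := sq_le_three_mul_of_isVPCode3 (by omega) hE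
  have ht : (t : ℝ) ≠ 0 := Nat.cast_ne_zero.2 fun ht => by nlinarith
  have hsq : ((k : ℝ) ^ 2) ≤ 3 * t := by exact_mod_cast hsqN
  have hlog := log_le_log (by positivity) hsq
  rw [log_pow, log_mul (by norm_num) ht] at hlog
  push_cast at hlog
  rw [sub_le_iff_le_add, ← add_div, le_div_iff₀ hlogk]
  linarith

end Rates

lemma alpha3_nonneg (k : ℕ) : 0 ≤ alpha3 k :=
  Real.sInf_nonneg fun _ => nonneg_of_mem_vpRates

lemma alpha3_le_two {k : ℕ} (hk : 2 ≤ k) : alpha3 k ≤ 2 :=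
  csInf_le ⟨0, fun _ => nonneg_of_mem_vpRates⟩ (two_mem_vpRates hk)

lemma two_sub_le_alpha3 {k : ℕ} (hk : 2 ≤ k) : 2 - log 3 / log k ≤ alpha3 k :=
  le_csInf ⟨2, two_mem_vpRates hk⟩ fun _ => two_sub_le_of_mem_vpRates hk

theorem tendsto_alpha3 : Tendsto alpha3 atTop (𝓝 2) := by
  have hlower : Tendsto (fun k : ℕ => 2 - log 3 / log k) atTop (𝓝 2) := by
    simpa using tendsto_const_nhds.sub
      (tendsto_const_nhds.div_atTop (tendsto_log_atTop.comp tendsto_natCast_atTop_atTop))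
  exact tendsto_of_tendsto_of_tendsto_of_le_of_le' hlower tendsto_const_nhds
    (eventually_atTop.2 ⟨2, fun _ => two_sub_le_alpha3⟩)
    (eventually_atTop.2 ⟨2, fun _ => alpha3_le_two⟩)

lemma alpha3_three_le : alpha3 3 ≤ log 7 / log 3 :=
  csInf_le ⟨0, fun _ => nonneg_of_mem_vpRates⟩ ⟨7, code7, isVPCode3_code7, by norm_num⟩

lemma log_seven_div_log_three_lt_two : log 7 / log 3 < 2 := by
  rw [div_lt_iff₀ (log_pos (by norm_num)), ← log_rpow (by norm_num)]
  exact log_lt_log (by norm_num) (by norm_num)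

theorem stmt_10 :
    Filter.liminf (fun k : ℕ => alpha3 k) Filter.atTop = 2 ∧
    alpha3 3 ≤ Real.log 7 / Real.log 3 ∧
    Real.log 7 / Real.log 3 < 2 ∧
    (⨅ k : {k : ℕ // 2 ≤ k}, alpha3 k) < Filter.liminf (fun k : ℕ => alpha3 k) Filter.atTop := by
  have hliminf : liminf (fun k : ℕ => alpha3 k) atTop = 2 := tendsto_alpha3.liminf_eq
  refine ⟨hliminf, alpha3_three_le, log_seven_div_log_three_lt_two, ?_⟩
  calc (⨅ k : {k : ℕ // 2 ≤ k}, alpha3 k) ≤ alpha3 3 :=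
        ciInf_le (f := fun k : {k : ℕ // 2 ≤ k} => alpha3 k)
          ⟨0, Set.forall_mem_range.2 fun k => alpha3_nonneg k⟩ ⟨3, by norm_num⟩
    _ ≤ log 7 / log 3 := alpha3_three_le
    _ < 2 := log_seven_div_log_three_lt_two
    _ = _ := hliminf.symm
end

section
/- Consider a very-pliable index coding instance with m messages in which every receiver's side-information set H is nonempty. If there exists a very-pliable code of size t for alphabet size k, then there exists a very-pliable code of size t · 2^(m-1) for alphabet size 2k. Consequently α_{2k} ≤ (α_k log k + (m-1) log 2) / log(2k). -/
/-- A very-pliable index code of size `t` for alphabet size `k` for the instance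
`(m, U)`: for each receiver `H ∈ U`, each codeword and each side-information
realisation, some message index outside `H` has its value determined. -/
def IsVPCode (m k t : ℕ) (U : Set (Finset (Fin m))) (E : (Fin m → Fin k) → Fin t) : Prop :=
  ∀ H ∈ U, ∀ (c : Fin t) (x' : Fin m → Fin k),
    ∃ i ∉ H, ∃ v : Fin k, ∀ x, E x = c → (∀ h ∈ H, x h = x' h) → x i = v

/-- The optimal very-pliable rate `α_k` for the instance `(m, U)`. -/
noncomputable def vpRate (m k : ℕ) (U : Set (Finset (Fin m))) : ℝ :=
  sInf {r : ℝ | ∃ (t : ℕ) (E : (Fin m → Fin k) → Fin t),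
    IsVPCode m k t U E ∧ r = Real.log (t : ℝ) / Real.log (k : ℝ)}

private lemma fin2_swap : ∀ a b c d : Fin 2, a + b = c + d → b + d = a + c := by decide

private lemma fin2_eq_of_add_zero : ∀ a b : Fin 2, a + b = 0 → a = b := by decide

private lemma fin2_add_self : ∀ a : Fin 2, a + a = 0 := by decide

/-- XOR chain of consecutive differences. -/
def chainD (m : ℕ) (b : Fin m → Fin 2) (j : Fin (m - 1)) : Fin 2 :=
  b ⟨j.1, by omega⟩ + b ⟨j.1 + 1, by omega⟩

lemma chainD_forall {m : ℕ} {b b' : Fin m → Fin 2}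
    (h : chainD m b = chainD m b') :
    ∀ n (hn : n < m), b ⟨n, hn⟩ + b' ⟨n, hn⟩
      = b ⟨0, lt_of_le_of_lt (Nat.zero_le n) hn⟩ + b' ⟨0, lt_of_le_of_lt (Nat.zero_le n) hn⟩ := by
  intro n
  induction n with
  | zero => intro hn; rfl
  | succ p ih =>
    intro hn
    have hp : p < m := by omega
    have hc : b ⟨p, hp⟩ + b ⟨p + 1, hn⟩ = b' ⟨p, hp⟩ + b' ⟨p + 1, hn⟩ := by
      have := congrFun h ⟨p, by omega⟩
      simpa [chainD] using this
    have hswap := fin2_swap _ _ _ _ hc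
    rw [hswap]
    exact ih hp

lemma chainD_inj {m : ℕ} {b b' : Fin m → Fin 2} (h : chainD m b = chainD m b')
    (h0 : Fin m) (hb : b h0 = b' h0) : b = b' := by
  funext i
  have key := chainD_forall h
  have e1 := key h0.1 h0.2
  have e2 := key i.1 i.2
  rw [hb, fin2_add_self] at e1
  rw [← e1] at e2
  exact fin2_eq_of_add_zero _ _ e2

/-- The extended code: pair each `Fin (2k)` symbol as a bit and a `Fin k` value,
apply `E` to the values and the XOR-chain to the bits. -/
noncomputable def VPext (m k t : ℕ) (E : (Fin m → Fin k) → Fin t)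
    (x : Fin m → Fin (2 * k)) : Fin (t * 2 ^ (m - 1)) :=
  finProdFinEquiv (E (fun i => (finProdFinEquiv.symm (x i)).2),
    finFunctionFinEquiv (chainD m (fun i => (finProdFinEquiv.symm (x i)).1)))

lemma vpext_isCode (m k t : ℕ) (U : Set (Finset (Fin m)))
    (hU : ∀ H ∈ U, H.Nonempty ∧ H ≠ Finset.univ)
    (E : (Fin m → Fin k) → Fin t) (hE : IsVPCode m k t U E) :
    IsVPCode m (2 * k) (t * 2 ^ (m - 1)) U (VPext m k t E) := by
  intro H hH c' x'
  obtain ⟨h0, hh0⟩ := (hU H hH).1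
  obtain ⟨i, hi, v, hv⟩ :=
    hE H hH (finProdFinEquiv.symm c').1 (fun j => (finProdFinEquiv.symm (x' j)).2)
  refine ⟨i, hi, ?_⟩
  by_cases hex : ∃ x : Fin m → Fin (2 * k), VPext m k t E x = c' ∧ ∀ h ∈ H, x h = x' h
  · obtain ⟨x₀, hx₀c, hx₀H⟩ := hex
    refine ⟨x₀ i, ?_⟩
    intro x hxc hxH
    have hdec : ∀ y : Fin m → Fin (2 * k), VPext m k t E y = c' →
        E (fun j => (finProdFinEquiv.symm (y j)).2) = (finProdFinEquiv.symm c').1 ∧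
        finFunctionFinEquiv (chainD m (fun j => (finProdFinEquiv.symm (y j)).1))
          = (finProdFinEquiv.symm c').2 := by
      intro y hyc
      have h2 := congrArg finProdFinEquiv.symm hyc
      rw [VPext, Equiv.symm_apply_apply] at h2
      exact ⟨congrArg Prod.fst h2, congrArg Prod.snd h2⟩
    obtain ⟨hEx, hPx⟩ := hdec x hxc
    obtain ⟨hEx₀, hPx₀⟩ := hdec x₀ hx₀c
    have ha : (finProdFinEquiv.symm (x i)).2 = (finProdFinEquiv.symm (x₀ i)).2 := by
      rw [hv _ hEx (fun h hh => by rw [hxH h hh]),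
          hv _ hEx₀ (fun h hh => by rw [hx₀H h hh])]
    have hchain : chainD m (fun j => (finProdFinEquiv.symm (x j)).1)
        = chainD m (fun j => (finProdFinEquiv.symm (x₀ j)).1) :=
      finFunctionFinEquiv.injective (hPx.trans hPx₀.symm)
    have hb0 : (finProdFinEquiv.symm (x h0)).1 = (finProdFinEquiv.symm (x₀ h0)).1 := by
      rw [hxH h0 hh0, hx₀H h0 hh0]
    have hb := chainD_inj hchain h0 hb0
    have hpair : finProdFinEquiv.symm (x i) = finProdFinEquiv.symm (x₀ i) :=
      Prod.ext (congrFun hb i) ha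
    exact finProdFinEquiv.symm.injective hpair
  · exact ⟨x' i, fun x hxc hxH => absurd ⟨x, hxc, hxH⟩ hex⟩

private lemma log_nat_nonneg (n : ℕ) : 0 ≤ Real.log n := by
  rcases n with _ | n
  · simp
  · exact Real.log_nonneg (by exact_mod_cast Nat.one_le_iff_ne_zero.mpr (Nat.succ_ne_zero n))

theorem stmt_12 (m k t : ℕ) (hm : 1 ≤ m) (hk : 2 ≤ k)
    (U : Set (Finset (Fin m)))
    (hU : ∀ H ∈ U, H.Nonempty ∧ H ≠ Finset.univ)
    (E : (Fin m → Fin k) → Fin t) (hE : IsVPCode m k t U E) :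
    (∃ E' : (Fin m → Fin (2 * k)) → Fin (t * 2 ^ (m - 1)),
      IsVPCode m (2 * k) (t * 2 ^ (m - 1)) U E') ∧
    vpRate m (2 * k) U ≤
      (vpRate m k U * Real.log (k : ℝ) + ((m : ℝ) - 1) * Real.log 2) /
        Real.log ((2 * k : ℕ) : ℝ) := by
  refine ⟨⟨VPext m k t E, vpext_isCode m k t U hU E hE⟩, ?_⟩
  have hk1 : (1 : ℝ) < (k : ℝ) := by exact_mod_cast hk.trans_lt' one_lt_two
  have hlogk : 0 < Real.log (k : ℝ) := Real.log_pos hk1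
  have hlog2k : 0 < Real.log ((2 * k : ℕ) : ℝ) := by
    apply Real.log_pos
    push_cast
    nlinarith
  set C : ℝ := ((m : ℝ) - 1) * Real.log 2 with hC
  set L : ℝ := Real.log ((2 * k : ℕ) : ℝ) with hL
  -- step: for every code of size t' for alphabet k
  have hStep : ∀ r ∈ {r : ℝ | ∃ (t' : ℕ) (E₁ : (Fin m → Fin k) → Fin t'),
      IsVPCode m k t' U E₁ ∧ r = Real.log (t' : ℝ) / Real.log (k : ℝ)},
      vpRate m (2 * k) U ≤ (r * Real.log (k : ℝ) + C) / L := by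
    rintro r ⟨t', E₁, hE₁, rfl⟩
    have ht' : 0 < t' := by
      rw [Fin.pos_iff_nonempty]
      exact ⟨E₁ (fun _ => ⟨0, by omega⟩)⟩
    have hbdd : BddBelow {r : ℝ | ∃ (s : ℕ) (E₂ : (Fin m → Fin (2 * k)) → Fin s),
        IsVPCode m (2 * k) s U E₂ ∧ r = Real.log (s : ℝ) / Real.log ((2 * k : ℕ) : ℝ)} := by
      refine ⟨0, ?_⟩
      rintro r ⟨s, E₂, _, rfl⟩
      exact div_nonneg (log_nat_nonneg s) (log_nat_nonneg _)
    have hmem : Real.log ((t' * 2 ^ (m - 1) : ℕ) : ℝ) / Real.log ((2 * k : ℕ) : ℝ) ∈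
        {r : ℝ | ∃ (s : ℕ) (E₂ : (Fin m → Fin (2 * k)) → Fin s),
        IsVPCode m (2 * k) s U E₂ ∧ r = Real.log (s : ℝ) / Real.log ((2 * k : ℕ) : ℝ)} :=
      ⟨t' * 2 ^ (m - 1), VPext m k t' E₁, vpext_isCode m k t' U hU E₁ hE₁, rfl⟩
    have h1 : vpRate m (2 * k) U
        ≤ Real.log ((t' * 2 ^ (m - 1) : ℕ) : ℝ) / Real.log ((2 * k : ℕ) : ℝ) := by
      rw [vpRate]
      exact csInf_le hbdd hmem
    have hlogsplit : Real.log ((t' * 2 ^ (m - 1) : ℕ) : ℝ) = Real.log (t' : ℝ) + C := by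
      have hcast : ((t' * 2 ^ (m - 1) : ℕ) : ℝ) = (t' : ℝ) * 2 ^ (m - 1) := by push_cast; ring
      rw [hcast, Real.log_mul (by exact_mod_cast ht'.ne') (by positivity), Real.log_pow, hC]
      congr 1
      rw [Nat.cast_sub hm]
      norm_num
    rw [hlogsplit] at h1
    have hrk : Real.log (t' : ℝ) / Real.log (k : ℝ) * Real.log (k : ℝ) = Real.log (t' : ℝ) :=
      div_mul_cancel₀ _ hlogk.ne'
    rw [hrk]
    exact h1
  have hSne : {r : ℝ | ∃ (t' : ℕ) (E₁ : (Fin m → Fin k) → Fin t'),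
      IsVPCode m k t' U E₁ ∧ r = Real.log (t' : ℝ) / Real.log (k : ℝ)}.Nonempty :=
    ⟨_, t, E, hE, rfl⟩
  have hB : (vpRate m (2 * k) U * L - C) / Real.log (k : ℝ) ≤ vpRate m k U := by
    conv_rhs => rw [vpRate]
    apply le_csInf hSne
    intro r hr
    have h2 := hStep r hr
    rw [le_div_iff₀ hlog2k] at h2
    rw [div_le_iff₀ hlogk]
    linarith
  rw [div_le_iff₀ hlogk] at hB
  rw [le_div_iff₀ hlog2k]
  linarith
end

section
/- If a very-pliable index coding instance admits a pliable index code of rate 1 for alphabet size k (i.e., an encoder with exactly k codewords such that each receiver H decodes a fixed message index outside H), then for every ℓ ≥ 1 the instance admits a pliable index code with k^ℓ codewords for alphabet size k^ℓ, and hence the optimal rates satisfy α_{k^ℓ} = β_{k^ℓ} = 1. -/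
/-- A pliable index code: each receiver `H` decodes a fixed message index outside `H`,
independent of the codeword and the side-information realisation. -/
def IsPliableCode (m k t : ℕ) (U : Set (Finset (Fin m))) (E : (Fin m → Fin k) → Fin t) : Prop :=
  ∀ H ∈ U, ∃ i ∉ H, ∀ x y : Fin m → Fin k,
    E x = E y → (∀ h ∈ H, x h = y h) → x i = y i

/-- The optimal pliable rate `β_k`. -/
noncomputable def pliableRate (m k : ℕ) (U : Set (Finset (Fin m))) : ℝ :=
  sInf {r : ℝ | ∃ (t : ℕ) (E : (Fin m → Fin k) → Fin t),
    IsPliableCode m k t U E ∧ r = Real.log (t : ℝ) / Real.log (k : ℝ)}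

lemma pliable_to_vp {m k t : ℕ} (hk : 0 < k) {U : Set (Finset (Fin m))}
    {E : (Fin m → Fin k) → Fin t} (h : IsPliableCode m k t U E) : IsVPCode m k t U E := by
  intro H hH c x'
  obtain ⟨i, hi, hdec⟩ := h H hH
  refine ⟨i, hi, ?_⟩
  by_cases hex : ∃ x₀, E x₀ = c ∧ ∀ h' ∈ H, x₀ h' = x' h'
  · obtain ⟨x₀, hc0, ha0⟩ := hex
    refine ⟨x₀ i, fun x hc ha => ?_⟩
    exact hdec x x₀ (hc.trans hc0.symm) (fun h' hh => (ha h' hh).trans (ha0 h' hh).symm)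
  · exact ⟨⟨0, hk⟩, fun x hc ha => absurd ⟨x, hc, ha⟩ hex⟩

lemma vp_lower {m k t : ℕ} (hk : 0 < k) {U : Set (Finset (Fin m))}
    {E : (Fin m → Fin k) → Fin t} (hE : IsVPCode m k t U E)
    {H : Finset (Fin m)} (hH : H ∈ U) (hne : H ≠ Finset.univ) : k ≤ t := by
  classical
  have hg : Function.Injective (fun a : Fin k => E (fun p => if p ∈ H then ⟨0, hk⟩ else a)) := by
    intro a b hab
    set xa : Fin m → Fin k := fun p => if p ∈ H then ⟨0, hk⟩ else a with hxa
    set xb : Fin m → Fin k := fun p => if p ∈ H then ⟨0, hk⟩ else b with hxb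
    obtain ⟨i, hi, v, hv⟩ := hE H hH (E xa) xa
    have ha : xa i = v := hv xa rfl (fun _ _ => rfl)
    have hb : xb i = v := hv xb hab.symm (by intro h hh; simp [hxa, hxb, hh])
    have : xa i = xb i := ha.trans hb.symm
    simpa [hxa, hxb, if_neg hi] using this
  simpa using Fintype.card_le_of_injective _ hg

lemma concat {m k : ℕ} (ℓ : ℕ) {U : Set (Finset (Fin m))}
    {E : (Fin m → Fin k) → Fin k} (hE : IsPliableCode m k k U E) :
    ∃ E' : (Fin m → Fin (k ^ ℓ)) → Fin (k ^ ℓ), IsPliableCode m (k ^ ℓ) (k ^ ℓ) U E' := by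
  let e : (Fin ℓ → Fin k) ≃ Fin (k ^ ℓ) := finFunctionFinEquiv
  refine ⟨fun x => e (fun j => E (fun p => e.symm (x p) j)), ?_⟩
  intro H hH
  obtain ⟨i, hi, hdec⟩ := hE H hH
  refine ⟨i, hi, fun x y hxy hag => ?_⟩
  have hcomp : ∀ j, E (fun p => e.symm (x p) j) = E (fun p => e.symm (y p) j) := by
    intro j
    exact congrFun (e.injective hxy) j
  have : e.symm (x i) = e.symm (y i) := by
    funext j
    exact hdec _ _ (hcomp j) (fun h hh => by rw [hag h hh])
  exact e.symm.injective this

theorem stmt_13 (m k : ℕ) (hm : 1 ≤ m) (hk : 2 ≤ k)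
    (U : Set (Finset (Fin m))) (hUne : U.Nonempty)
    (hU : ∀ H ∈ U, H ≠ Finset.univ)
    (E : (Fin m → Fin k) → Fin k) (hE : IsPliableCode m k k U E) :
    ∀ ℓ : ℕ, 1 ≤ ℓ →
      (∃ E' : (Fin m → Fin (k ^ ℓ)) → Fin (k ^ ℓ), IsPliableCode m (k ^ ℓ) (k ^ ℓ) U E') ∧
      vpRate m (k ^ ℓ) U = 1 ∧ pliableRate m (k ^ ℓ) U = 1 := by
  intro ℓ hℓ
  obtain ⟨H, hH⟩ := hUne
  have hHne := hU H hH
  set K := k ^ ℓ with hK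
  have hK2 : 2 ≤ K := le_trans hk (Nat.le_self_pow (by omega) k)
  have hKpos : 0 < K := by omega
  have hKgt1 : (1 : ℝ) < (K : ℝ) := by exact_mod_cast hK2.trans_lt' one_lt_two
  have hlogK : 0 < Real.log (K : ℝ) := Real.log_pos hKgt1
  obtain ⟨E', hE'⟩ := concat (k := k) ℓ hE
  have hE'vp : IsVPCode m K K U E' := pliable_to_vp hKpos hE'
  -- the rate 1 is achieved
  have hone : Real.log (K : ℝ) / Real.log (K : ℝ) = 1 := div_self hlogK.ne'
  -- lower bound for any code
  have hlb : ∀ (t : ℕ) (F : (Fin m → Fin K) → Fin t), IsVPCode m K t U F →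
      (1 : ℝ) ≤ Real.log (t : ℝ) / Real.log (K : ℝ) := by
    intro t F hF
    have hKt : K ≤ t := vp_lower hKpos hF hH hHne
    have : Real.log (K : ℝ) ≤ Real.log (t : ℝ) :=
      Real.log_le_log (by exact_mod_cast hKpos) (by exact_mod_cast hKt)
    rw [le_div_iff₀ hlogK]
    linarith
  refine ⟨⟨E', hE'⟩, ?_, ?_⟩
  · apply le_antisymm
    · exact csInf_le ⟨1, fun r ⟨t, F, hF, hr⟩ => hr ▸ hlb t F hF⟩
        ⟨K, E', hE'vp, hone.symm⟩
    · exact le_csInf ⟨1, K, E', hE'vp, hone.symm⟩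
        (fun r ⟨t, F, hF, hr⟩ => hr ▸ hlb t F hF)
  · apply le_antisymm
    · exact csInf_le ⟨1, fun r ⟨t, F, hF, hr⟩ => hr ▸ hlb t F (pliable_to_vp hKpos hF)⟩
        ⟨K, E', hE', hone.symm⟩
    · exact le_csInf ⟨1, K, E', hE', hone.symm⟩
        (fun r ⟨t, F, hF, hr⟩ => hr ▸ hlb t F (pliable_to_vp hKpos hF))
end

section
/- Let m = 3, k ≥ 2, and let E : (Fin 3 → Fin k) → Fin t be an encoder satisfying the very-pliable decoding conditions for the four receivers with side-information sets ∅, {1}, {1,2}, {1,3}. Then for every codeword c and every value a ∈ Fin k, the set {x ∈ E⁻¹(c) : x 1 = a} has at most one element; consequently |E⁻¹(c)| ≤ k and t ≥ k². -/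
theorem stmt_14 (k t : ℕ) (hk : 2 ≤ k)
    (E : (Fin 3 → Fin k) → Fin t)
    (hvp : ∀ H ∈ ({∅, {0}, {0, 1}, {0, 2}} : Set (Finset (Fin 3))),
      ∀ (c : Fin t) (x' : Fin 3 → Fin k),
        ∃ i ∉ H, ∃ v : Fin k, ∀ x, E x = c → (∀ h ∈ H, x h = x' h) → x i = v) :
    (∀ (c : Fin t) (a : Fin k),
      (Finset.univ.filter (fun x : Fin 3 → Fin k => E x = c ∧ x 0 = a)).card ≤ 1) ∧
    (∀ c : Fin t, (Finset.univ.filter (fun x : Fin 3 → Fin k => E x = c)).card ≤ k) ∧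
    k ^ 2 ≤ t := by
  have key : ∀ (c : Fin t) (a : Fin k) (x y : Fin 3 → Fin k),
      E x = c → E y = c → x 0 = a → y 0 = a → x = y := by
    intro c a x y hx hy hx0 hy0
    obtain ⟨i, hi, v, hv⟩ := hvp {0} (by simp) c (fun _ => a)
    have hxi : x i = v := hv x hx (by intro h hh; simp only [Finset.mem_singleton] at hh; subst hh; exact hx0)
    have hyi : y i = v := hv y hy (by intro h hh; simp only [Finset.mem_singleton] at hh; subst hh; exact hy0)
    fin_cases i
    · simp at hi
    · obtain ⟨j, hj, w, hw⟩ := hvp {0, 1} (by simp) c ![a, v, v]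
      have hcond : ∀ z : Fin 3 → Fin k, z 0 = a → z 1 = v →
          ∀ h ∈ ({0, 1} : Finset (Fin 3)), z h = ![a, v, v] h := by
        intro z h0 h1 h hh
        fin_cases hh <;> simp [h0, h1]
      have hxj : x j = w := hw x hx (hcond x hx0 hxi)
      have hyj : y j = w := hw y hy (hcond y hy0 hyi)
      fin_cases j
      · simp at hj
      · simp at hj
      · funext m
        fin_cases m
        · exact hx0.trans hy0.symm
        · exact hxi.trans hyi.symm
        · exact hxj.trans hyj.symm
    · obtain ⟨j, hj, w, hw⟩ := hvp {0, 2} (by simp) c ![a, v, v]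
      have hcond : ∀ z : Fin 3 → Fin k, z 0 = a → z 2 = v →
          ∀ h ∈ ({0, 2} : Finset (Fin 3)), z h = ![a, v, v] h := by
        intro z h0 h2 h hh
        fin_cases hh <;> simp [h0, h2]
      have hxj : x j = w := hw x hx (hcond x hx0 hxi)
      have hyj : y j = w := hw y hy (hcond y hy0 hyi)
      fin_cases j
      · simp at hj
      · funext m
        fin_cases m
        · exact hx0.trans hy0.symm
        · exact hxj.trans hyj.symm
        · exact hxi.trans hyi.symm
      · simp at hj
  have h1 : ∀ (c : Fin t) (a : Fin k),
      (Finset.univ.filter (fun x : Fin 3 → Fin k => E x = c ∧ x 0 = a)).card ≤ 1 := by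
    intro c a
    apply Finset.card_le_one.mpr
    intro x hx y hy
    simp only [Finset.mem_filter] at hx hy
    exact key c a x y hx.2.1 hy.2.1 hx.2.2 hy.2.2
  have h2 : ∀ c : Fin t, (Finset.univ.filter (fun x : Fin 3 → Fin k => E x = c)).card ≤ k := by
    intro c
    set s := Finset.univ.filter (fun x : Fin 3 → Fin k => E x = c)
    have := Finset.card_le_mul_card_image (f := fun x : Fin 3 → Fin k => x 0) s 1
      (by
        intro a ha
        refine le_trans (Finset.card_le_card ?_) (h1 c a)
        intro x hx
        simp only [Finset.mem_filter, s] at hx ⊢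
        exact ⟨hx.1.1, hx.1.2, hx.2⟩)
    calc s.card ≤ 1 * (s.image fun x => x 0).card := this
      _ = (s.image fun x => x 0).card := by ring
      _ ≤ Fintype.card (Fin k) := Finset.card_le_univ _
      _ = k := by simp
  refine ⟨h1, h2, ?_⟩
  have hmain := Finset.card_le_mul_card_image (s := (Finset.univ : Finset (Fin 3 → Fin k))) (f := E) k
    (fun c _ => h2 c)
  have hcard : (Finset.univ : Finset (Fin 3 → Fin k)).card = k ^ 3 := by
    simp [Finset.card_univ]
  have himg : ((Finset.univ : Finset (Fin 3 → Fin k)).image E).card ≤ t := by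
    refine le_trans (Finset.card_le_univ _) ?_
    simp
  have hk3 : k ^ 3 ≤ k * t := by
    calc k ^ 3 = (Finset.univ : Finset (Fin 3 → Fin k)).card := hcard.symm
      _ ≤ k * ((Finset.univ : Finset (Fin 3 → Fin k)).image E).card := hmain
      _ ≤ k * t := Nat.mul_le_mul_left k himg
  have hkpos : 0 < k := by omega
  have : k * k ^ 2 ≤ k * t := by
    calc k * k ^ 2 = k ^ 3 := by ring
      _ ≤ k * t := hk3
  exact Nat.le_of_mul_le_mul_left this hkpos
end

section
/- Let m ≥ 3, k ≥ 2, and let E : (Fin m → Fin k) → Fin t be an encoder with decoding functions: for each i ∈ Fin m, a function I_i : Fin t × Fin k → Fin m and G_i : Fin t × Fin k → Fin k such that I_i(c, a) ≠ i and for every x with E x = c and x i = a, x (I_i(c,a)) = G_i(c,a). Fix a codeword c. Then the number of x ∈ E⁻¹(c) such that, setting j = I_1(c, x 1), we have I_j(c, x j) ∉ {1, j}, is at most k^(m-2). -/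
theorem stmt_16 (m k t : ℕ) (hm : 3 ≤ m) (hk : 2 ≤ k)
    (E : (Fin m → Fin k) → Fin t)
    (I : Fin m → Fin t → Fin k → Fin m) (G : Fin m → Fin t → Fin k → Fin k)
    (hI : ∀ (i : Fin m) (c : Fin t) (a : Fin k), I i c a ≠ i)
    (hG : ∀ (i : Fin m) (c : Fin t) (a : Fin k) (x : Fin m → Fin k),
      E x = c → x i = a → x (I i c a) = G i c a)
    (c : Fin t) :
    (Finset.univ.filter (fun x : Fin m → Fin k =>
      E x = c ∧
        I (I ⟨0, by omega⟩ c (x ⟨0, by omega⟩)) c (x (I ⟨0, by omega⟩ c (x ⟨0, by omega⟩))) ∉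
          ({⟨0, by omega⟩, I ⟨0, by omega⟩ c (x ⟨0, by omega⟩)} : Finset (Fin m)))).card
      ≤ k ^ (m - 2) := by
  have hm0 : (0 : ℕ) < m := by omega
  set z : Fin m := ⟨0, hm0⟩ with hz
  set P : (Fin m → Fin k) → Prop := fun x =>
      E x = c ∧
        I (I z c (x z)) c (x (I z c (x z))) ∉ ({z, I z c (x z)} : Finset (Fin m)) with hP
  have hPl : (Finset.univ.filter (fun x : Fin m → Fin k =>
      E x = c ∧
        I (I ⟨0, by omega⟩ c (x ⟨0, by omega⟩)) c (x (I ⟨0, by omega⟩ c (x ⟨0, by omega⟩))) ∉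
          ({⟨0, by omega⟩, I ⟨0, by omega⟩ c (x ⟨0, by omega⟩)} : Finset (Fin m)))) =
      Finset.univ.filter P := rfl
  rw [hPl]
  have hsum : (Finset.univ.filter P).card =
      ∑ a : Fin k, ((Finset.univ.filter P).filter (fun x => x z = a)).card := by
    exact Finset.card_eq_sum_card_fiberwise (fun x _ => Finset.mem_univ (x z))
  rw [hsum]
  have hbound : ∀ a : Fin k,
      ((Finset.univ.filter P).filter (fun x => x z = a)).card ≤ k ^ (m - 3) := by
    intro a
    set j : Fin m := I z c a with hj
    set xj : Fin k := G z c a with hxj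
    set l : Fin m := I j c xj with hl
    -- key: membership characterization
    have hmem : ∀ x : Fin m → Fin k,
        x ∈ (Finset.univ.filter P).filter (fun x => x z = a) →
        E x = c ∧ x z = a ∧ x j = xj ∧ x l = G j c xj ∧ l ∉ ({z, j} : Finset (Fin m)) := by
      intro x hx
      simp only [Finset.mem_filter, Finset.mem_univ, true_and, hP] at hx
      obtain ⟨⟨hEx, hcond⟩, hxz⟩ := hx
      have hxja : x j = xj := by
        rw [hj, hxj, ← hxz]; exact hG z c (x z) x hEx rfl
      have hxl : x l = G j c xj := by
        rw [hl, ← hxja]; exact hG j c (x j) x hEx rfl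
      refine ⟨hEx, hxz, hxja, hxl, ?_⟩
      have h2 : x (I z c a) = G z c a := hxja
      rw [hxz, h2] at hcond
      exact hcond
    by_cases hgood : l ∉ ({z, j} : Finset (Fin m))
    · -- distinctness
      have hjz : j ≠ z := hI z c a
      have hlz : l ≠ z := by intro h; exact hgood (by simp [h])
      have hlj : l ≠ j := by intro h; exact hgood (by simp [h])
      have hcard3 : ({z, j, l} : Finset (Fin m)).card = 3 := by
        rw [Finset.card_insert_of_notMem (by simp [hjz.symm, hlz.symm]),
          Finset.card_insert_of_notMem (by simp [hlj.symm])]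
        simp
      have hcardc : (({z, j, l} : Finset (Fin m))ᶜ).card = m - 3 := by
        rw [Finset.card_compl, hcard3]; simp
      -- injection into functions on the complement
      have := Finset.card_le_card_of_injOn
        (f := fun (x : Fin m → Fin k) (p : (({z, j, l} : Finset (Fin m))ᶜ : Finset (Fin m))) => x p)
        (s := (Finset.univ.filter P).filter (fun x => x z = a))
        (t := (Finset.univ : Finset ((({z, j, l} : Finset (Fin m))ᶜ : Finset (Fin m)) → Fin k)))
        (fun x _ => Finset.mem_univ _)
        ?_
      · refine le_trans this ?_
        rw [Finset.card_univ, Fintype.card_fun, Fintype.card_fin, Fintype.card_coe, hcardc]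
      · intro x hx y hy hxy
        obtain ⟨hEx, hxz, hxja, hxl, -⟩ := hmem x hx
        obtain ⟨hEy, hyz, hyja, hyl, -⟩ := hmem y hy
        funext i
        by_cases hi : i ∈ (({z, j, l} : Finset (Fin m))ᶜ : Finset (Fin m))
        · exact congrFun hxy ⟨i, hi⟩
        · simp only [Finset.mem_compl, not_not, Finset.mem_insert, Finset.mem_singleton] at hi
          rcases hi with h | h | h
          · rw [h, hxz, hyz]
          · rw [h, hxja, hyja]
          · rw [h, hxl, hyl]
    · -- bad case: set is empty
      have : (Finset.univ.filter P).filter (fun x => x z = a) = ∅ := by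
        rw [Finset.eq_empty_iff_forall_notMem]
        intro x hx
        obtain ⟨-, -, -, -, hc⟩ := hmem x hx
        exact hc (not_not.mp hgood)
      rw [this]; simp
  refine le_trans (Finset.sum_le_sum (fun a _ => hbound a)) ?_
  rw [Finset.sum_const, Finset.card_univ, Fintype.card_fin, smul_eq_mul]
  have h3 : m - 3 + 1 = m - 2 := by clear * - hm; omega
  have h4 : k * k ^ (m - 3) = k ^ (m - 2) := by rw [← h3, pow_succ']
  exact h4.le
end
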